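/- Let V* ∈ R^{P×K} have orthonormal columns, let a* ∈ R^K, and let R, R^+ ∈ O(K) be the optimal rotations aligning V and V^+ to V* respectively (i.e., R minimizes ||V - V*Y||_F over Y ∈ O(K) and R^+ minimizes ||V^+ - V*Y||_F). Then ||R^T diag(a*) R - R^{+T} diag(a*) R^+||_F ≤ 4 ||diag(a*)||_2 ||V^+ - V* R||_F. -/

import Mathlib

open Matrix

/-- Frobenius norm of a real matrix. -/
noncomputable def frobNorm {m n : ℕ} (A : Matrix (Fin m) (Fin n) ℝ) : ℝ :=
  Real.sqrt (∑ i, ∑ j, (A i j) ^ 2)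

/-- Spectral norm (ℓ₂ operator norm) of a real matrix. -/
noncomputable def specNorm {m n : ℕ} (A : Matrix (Fin m) (Fin n) ℝ) : ℝ :=
  ‖LinearMap.toContinuousLinearMap (Matrix.toEuclideanLin A)‖

/-!
Write `D = diagonal a*` and `S = R⁺`. Since `Rᵀ D R - Sᵀ D S = Rᵀ D (R - S) + (R - S)ᵀ D S` and
multiplication by an orthogonal matrix preserves the Frobenius norm, the left-hand side is at
most `2 ‖D‖₂ ‖R - S‖_F`. As `V*` is an isometry and `S` is optimal for `V⁺`,
`‖R - S‖_F = ‖V* R - V* S‖_F ≤ ‖V⁺ - V* R‖_F + ‖V⁺ - V* S‖_F ≤ 2 ‖V⁺ - V* R‖_F`.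
-/

section Frobenius

attribute [local instance] Matrix.frobeniusSeminormedAddCommGroup

variable {m n : ℕ}

lemma frobNorm_eq_norm (A : Matrix (Fin m) (Fin n) ℝ) : frobNorm A = ‖A‖ := by
  rw [frobenius_norm_def, frobNorm, Real.sqrt_eq_rpow]
  simp only [Real.norm_eq_abs, sq_abs, Real.rpow_two, one_div]

lemma frobNorm_add_le (A B : Matrix (Fin m) (Fin n) ℝ) :
    frobNorm (A + B) ≤ frobNorm A + frobNorm B := by
  simpa only [frobNorm_eq_norm] using norm_add_le A B

lemma frobNorm_sub_le (A B : Matrix (Fin m) (Fin n) ℝ) :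
    frobNorm (A - B) ≤ frobNorm A + frobNorm B := by
  simpa only [frobNorm_eq_norm] using norm_sub_le A B

lemma frobNorm_transpose (A : Matrix (Fin m) (Fin n) ℝ) : frobNorm Aᵀ = frobNorm A := by
  simpa only [frobNorm_eq_norm] using frobenius_norm_transpose A

end Frobenius

lemma sum_sum_sq_eq_trace_transpose_mul {m n : ℕ} (A : Matrix (Fin m) (Fin n) ℝ) :
    ∑ i, ∑ j, (A i j) ^ 2 = trace (Aᵀ * A) := by
  rw [trace, Finset.sum_comm]
  simp only [diag, mul_apply, transpose_apply, sq]

lemma frobNorm_mul_of_orthonormal_columns {m k n : ℕ} {W : Matrix (Fin m) (Fin k) ℝ}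
    (hW : Wᵀ * W = 1) (A : Matrix (Fin k) (Fin n) ℝ) : frobNorm (W * A) = frobNorm A := by
  rw [frobNorm, frobNorm, sum_sum_sq_eq_trace_transpose_mul, sum_sum_sq_eq_trace_transpose_mul,
    transpose_mul, Matrix.mul_assoc, ← Matrix.mul_assoc Wᵀ, hW, Matrix.one_mul]

lemma frobNorm_mul_of_orthogonal {m k : ℕ} {Q : Matrix (Fin k) (Fin k) ℝ}
    (hQ : Qᵀ * Q = 1) (A : Matrix (Fin m) (Fin k) ℝ) : frobNorm (A * Q) = frobNorm A := by
  have hQt : Qᵀᵀ * Qᵀ = 1 := by rw [transpose_transpose]; exact mul_eq_one_comm.mp hQ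
  rw [← frobNorm_transpose, transpose_mul, frobNorm_mul_of_orthonormal_columns hQt,
    frobNorm_transpose]

lemma specNorm_nonneg {m n : ℕ} (A : Matrix (Fin m) (Fin n) ℝ) : 0 ≤ specNorm A :=
  norm_nonneg _

lemma abs_le_specNorm_diagonal {k : ℕ} (a : Fin k → ℝ) (i : Fin k) :
    |a i| ≤ specNorm (diagonal a) := by
  have hL := (LinearMap.toContinuousLinearMap (toEuclideanLin (diagonal a))).le_opNorm
    (PiLp.single 2 i 1)
  have happly : toEuclideanLin (diagonal a) (PiLp.single 2 i 1) = PiLp.single 2 i (a i) := by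
    rw [← PiLp.toLp_single, ← PiLp.toLp_single, toLpLin_apply, diagonal_mulVec_single,
      mul_one]
  simpa only [specNorm, LinearMap.coe_toContinuousLinearMap', happly, PiLp.norm_single,
    Real.norm_eq_abs, abs_one, mul_one] using hL

lemma frobNorm_diagonal_mul_le {k n : ℕ} (a : Fin k → ℝ) (A : Matrix (Fin k) (Fin n) ℝ) :
    frobNorm (diagonal a * A) ≤ specNorm (diagonal a) * frobNorm A := by
  set s := specNorm (diagonal a)
  have hs : 0 ≤ s := specNorm_nonneg _
  have hsq : ∀ i, a i ^ 2 ≤ s ^ 2 := fun i => by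
    simpa only [sq_abs] using pow_le_pow_left₀ (abs_nonneg _) (abs_le_specNorm_diagonal a i) 2
  rw [frobNorm, frobNorm, ← Real.sqrt_sq hs, ← Real.sqrt_mul (sq_nonneg _), Finset.mul_sum]
  refine Real.sqrt_le_sqrt (Finset.sum_le_sum fun i _ => ?_)
  rw [Finset.mul_sum]
  refine Finset.sum_le_sum fun j _ => ?_
  rw [diagonal_mul, mul_pow]
  exact mul_le_mul_of_nonneg_right (hsq i) (sq_nonneg _)

lemma frobNorm_mul_diagonal_le {m k : ℕ} (a : Fin k → ℝ) (A : Matrix (Fin m) (Fin k) ℝ) :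
    frobNorm (A * diagonal a) ≤ specNorm (diagonal a) * frobNorm A := by
  rw [← frobNorm_transpose, transpose_mul, diagonal_transpose, ← frobNorm_transpose A]
  exact frobNorm_diagonal_mul_le a Aᵀ

lemma frobNorm_conj_diagonal_sub_conj_diagonal_le {k : ℕ} (a : Fin k → ℝ)
    {R S : Matrix (Fin k) (Fin k) ℝ} (hR : Rᵀ * R = 1) (hS : Sᵀ * S = 1) :
    frobNorm (Rᵀ * diagonal a * R - Sᵀ * diagonal a * S) ≤
      2 * specNorm (diagonal a) * frobNorm (R - S) := by
  have hRt : Rᵀᵀ * Rᵀ = 1 := by rw [transpose_transpose]; exact mul_eq_one_comm.mp hR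
  have hsplit : Rᵀ * diagonal a * R - Sᵀ * diagonal a * S =
      Rᵀ * (diagonal a * (R - S)) + (R - S)ᵀ * diagonal a * S := by
    rw [transpose_sub]
    noncomm_ring
  calc frobNorm (Rᵀ * diagonal a * R - Sᵀ * diagonal a * S)
      ≤ frobNorm (Rᵀ * (diagonal a * (R - S))) + frobNorm ((R - S)ᵀ * diagonal a * S) := by
        rw [hsplit]; exact frobNorm_add_le _ _
    _ = frobNorm (diagonal a * (R - S)) + frobNorm ((R - S)ᵀ * diagonal a) := by
        rw [frobNorm_mul_of_orthonormal_columns hRt, frobNorm_mul_of_orthogonal hS]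
    _ ≤ specNorm (diagonal a) * frobNorm (R - S) + specNorm (diagonal a) * frobNorm (R - S) := by
        gcongr
        · exact frobNorm_diagonal_mul_le a _
        · simpa only [frobNorm_transpose] using frobNorm_mul_diagonal_le a (R - S)ᵀ
    _ = 2 * specNorm (diagonal a) * frobNorm (R - S) := by ring

lemma frobNorm_sub_le_two_mul_of_frobNorm_le {p k : ℕ} {U B : Matrix (Fin p) (Fin k) ℝ}
    (hU : Uᵀ * U = 1) {R S : Matrix (Fin k) (Fin k) ℝ}
    (hS : frobNorm (B - U * S) ≤ frobNorm (B - U * R)) :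
    frobNorm (R - S) ≤ 2 * frobNorm (B - U * R) := by
  calc frobNorm (R - S) = frobNorm ((B - U * S) - (B - U * R)) := by
        rw [sub_sub_sub_cancel_left, ← Matrix.mul_sub,
          frobNorm_mul_of_orthonormal_columns hU]
    _ ≤ frobNorm (B - U * S) + frobNorm (B - U * R) := frobNorm_sub_le _ _
    _ ≤ 2 * frobNorm (B - U * R) := by linarith

theorem stmt_5_general {P K : ℕ} (Vstar Vplus : Matrix (Fin P) (Fin K) ℝ)
    (hVstar : Vstarᵀ * Vstar = 1)
    (astar : Fin K → ℝ)
    (R Rplus : Matrix (Fin K) (Fin K) ℝ)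
    (hR : Rᵀ * R = 1) (hRplus : Rplusᵀ * Rplus = 1)
    (hRplusmin : ∀ Y : Matrix (Fin K) (Fin K) ℝ, Yᵀ * Y = 1 →
      frobNorm (Vplus - Vstar * Rplus) ≤ frobNorm (Vplus - Vstar * Y)) :
    frobNorm (Rᵀ * Matrix.diagonal astar * R - Rplusᵀ * Matrix.diagonal astar * Rplus) ≤
      4 * specNorm (Matrix.diagonal astar) * frobNorm (Vplus - Vstar * R) := by
  have hRRplus : frobNorm (R - Rplus) ≤ 2 * frobNorm (Vplus - Vstar * R) :=
    frobNorm_sub_le_two_mul_of_frobNorm_le hVstar (hRplusmin R hR)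
  have hs := specNorm_nonneg (diagonal astar)
  calc _ ≤ 2 * specNorm (diagonal astar) * frobNorm (R - Rplus) :=
        frobNorm_conj_diagonal_sub_conj_diagonal_le astar hR hRplus
    _ ≤ 2 * specNorm (diagonal astar) * (2 * frobNorm (Vplus - Vstar * R)) := by gcongr
    _ = 4 * specNorm (diagonal astar) * frobNorm (Vplus - Vstar * R) := by ring

theorem stmt_5 {P K : ℕ} (Vstar V Vplus : Matrix (Fin P) (Fin K) ℝ)
    (hVstar : Vstarᵀ * Vstar = 1)
    (astar : Fin K → ℝ)
    (R Rplus : Matrix (Fin K) (Fin K) ℝ)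
    (hR : Rᵀ * R = 1) (hRplus : Rplusᵀ * Rplus = 1)
    (hRmin : ∀ Y : Matrix (Fin K) (Fin K) ℝ, Yᵀ * Y = 1 →
      frobNorm (V - Vstar * R) ≤ frobNorm (V - Vstar * Y))
    (hRplusmin : ∀ Y : Matrix (Fin K) (Fin K) ℝ, Yᵀ * Y = 1 →
      frobNorm (Vplus - Vstar * Rplus) ≤ frobNorm (Vplus - Vstar * Y)) :
    frobNorm (Rᵀ * Matrix.diagonal astar * R - Rplusᵀ * Matrix.diagonal astar * Rplus) ≤
      4 * specNorm (Matrix.diagonal astar) * frobNorm (Vplus - Vstar * R) :=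
  stmt_5_general Vstar Vplus hVstar astar R Rplus hR hRplus hRplusmin
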